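/- arXiv:2402.14781 — 2 statements merged into one kernel-verified Lean document; each statement's English description precedes it below -/
import Mathlib

section
/- Let d be a natural number and for each i ∈ Fin d let S i be a nonempty finite type (the candidate parent sets of node i), and let p i, w i, Y i : S i → ℝ. Define α j = ∑_{s ∈ S j} p j s · w j s for each j ∈ Fin d. Then ∑_{G ∈ Π_i S i} (∏_i p i (G i) · w i (G i)) · (∑_j Y j (G j)) = ∑_i (∏_{j ≠ i} α j) · (∑_{s ∈ S i} p i s · w i s · Y i s). -/
open Finset Function

/-- Absorbing `Y` into the factor of node `j` makes the integrand a product again, and a sum of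
products over a pi type factorises. -/
theorem Fintype.sum_prod_mul_apply_eq {ι R : Type*} [Fintype ι] [DecidableEq ι] [CommSemiring R]
    {κ : ι → Type*} [∀ i, Fintype (κ i)] (f : ∀ i, κ i → R) (j : ι) (Y : κ j → R) :
    ∑ G : (∀ i, κ i), (∏ i, f i (G i)) * Y (G j)
      = (∏ i ∈ univ.erase j, ∑ s, f i s) * ∑ s, f j s * Y s := by
  set g := update f j fun s => f j s * Y s
  have hgj : g j = fun s => f j s * Y s := update_self _ _ _
  have hg : ∀ i ∈ univ.erase j, g i = f i := fun i hi => update_of_ne (ne_of_mem_erase hi) _ _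
  calc ∑ G : (∀ i, κ i), (∏ i, f i (G i)) * Y (G j)
      = ∑ G : (∀ i, κ i), ∏ i, g i (G i) := by
        refine Finset.sum_congr rfl fun G _ => ?_
        rw [← mul_prod_erase univ _ (mem_univ j), ← mul_prod_erase univ _ (mem_univ j),
          Finset.prod_congr rfl fun i hi => congrFun (hg i hi) (G i), hgj]
        ring
    _ = ∏ i, ∑ s, g i s := (Fintype.prod_sum g).symm
    _ = (∏ i ∈ univ.erase j, ∑ s, f i s) * ∑ s, f j s * Y s := by
        rw [← mul_prod_erase univ _ (mem_univ j), mul_comm, hgj]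
        congr 1
        exact Finset.prod_congr rfl fun i hi => by rw [hg i hi]

theorem sum_prod_mul_sum_eq_general
    (d : ℕ) (S : Fin d → Type) [∀ i, Fintype (S i)]
    (p w Y : ∀ i, S i → ℝ) (α : Fin d → ℝ)
    (hα : ∀ j, α j = ∑ s : S j, p j s * w j s) :
    ∑ G : (∀ i, S i), (∏ i, p i (G i) * w i (G i)) * (∑ j, Y j (G j))
      = ∑ i, (∏ j ∈ Finset.univ.erase i, α j) * (∑ s : S i, p i s * w i s * Y i s) := by
  obtain rfl : α = fun j => ∑ s, p j s * w j s := funext hα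
  calc _ = ∑ j, ∑ G : (∀ i, S i), (∏ i, p i (G i) * w i (G i)) * Y j (G j) := by
        simp only [mul_sum]
        exact sum_comm
    _ = _ := sum_congr rfl fun j _ =>
        Fintype.sum_prod_mul_apply_eq (fun i s => p i s * w i s) j (Y j)

/-- Proposition 2: the expectation of a summing query with factorising weights under a
factorising graph prior decomposes into a weighted sum of per-node sums. -/
theorem sum_prod_mul_sum_eq
    (d : ℕ) (S : Fin d → Type) [∀ i, Fintype (S i)] [∀ i, Nonempty (S i)]
    (p w Y : ∀ i, S i → ℝ) (α : Fin d → ℝ)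
    (hα : ∀ j, α j = ∑ s : S j, p j s * w j s) :
    ∑ G : (∀ i, S i), (∏ i, p i (G i) * w i (G i)) * (∑ j, Y j (G j))
      = ∑ i, (∏ j ∈ Finset.univ.erase i, α j) * (∑ s : S i, p i s * w i s * Y i s) :=
  sum_prod_mul_sum_eq_general d S p w Y α hα
end

section
/- Let d be a natural number, for each i ∈ Fin d let S i be a nonempty finite type, fix a node k ∈ Fin d and a distinguished parent set s* ∈ S k. Let 𝓛 be a nonempty finite type with q : 𝓛 → ℝ nonnegative summing to 1 and r : 𝓛 → (Π_i S i) → ℝ nonnegative with ∑_G r L G = 1 for all L. For i ≠ k let ℓ i : S i → ℝ be positive constants, and let ℓ k : ℝ → S k → ℝ be positive with ℓ k ψ s = ℓ k 0 s for all ψ whenever s ≠ s*, and with ψ ↦ ℓ k ψ s* differentiable. Define F(ψ) = ∑_L q L · ∑_G r L G · (∏_{i ≠ k} ℓ i (G i)) · ℓ k ψ (G k). Then for every ψ₀, the derivative of ψ ↦ log F(ψ) at ψ₀ equals c · (derivative of ψ ↦ log ℓ k ψ s* at ψ₀), where c = (∑_L q L · ∑_{G : G k = s*} r L G · (∏_{i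 ≠ k} ℓ i (G i)) · ℓ k ψ₀ (G k)) / F(ψ₀), and 0 ≤ c ≤ 1. -/
/-!
Only the factor `ℓk ψ sstar` of the mixture depends on `ψ`, so splitting the sum over graphs
according to whether `G k = sstar` writes the marginal likelihood as `F ψ = A + B * g ψ` with
`g ψ = ℓk ψ sstar` and constants `A, B ≥ 0`. Then `(log F)' = B g' / F = (B g / F) · (log g)'`,
and the factor `B g / F` is the posterior mass of the graphs with `Pa_k = s*`, which lies in
`[0, 1]` since `A ≥ 0`.
-/

open Finset

theorem Finset.sum_filter_mul_eq_sum_mul {ι σ R : Type*} [DecidableEq σ]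
    [NonUnitalNonAssocSemiring R] (s : Finset ι) (key : ι → σ) (t : σ) (w : ι → R)
    (f : σ → R) :
    ∑ i ∈ s.filter (fun i => key i = t), w i * f (key i) =
      (∑ i ∈ s.filter (fun i => key i = t), w i) * f t := by
  rw [sum_mul]
  exact sum_congr rfl fun i hi => by rw [(mem_filter.mp hi).2]

theorem Finset.sum_mul_eq_add_mul_of_eqOn_ne {ι σ R : Type*} [DecidableEq σ]
    [NonUnitalNonAssocSemiring R] (s : Finset ι) (key : ι → σ) (t : σ) (w : ι → R)
    (f g : σ → R) (hfg : ∀ u, u ≠ t → f u = g u) :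
    ∑ i ∈ s, w i * f (key i) =
      ∑ i ∈ s.filter (fun i => key i ≠ t), w i * g (key i) +
        (∑ i ∈ s.filter (fun i => key i = t), w i) * f t := by
  rw [← sum_filter_not_add_sum_filter s (fun i => key i = t),
    sum_filter_mul_eq_sum_mul]
  congr 1
  exact sum_congr rfl fun i hi => by rw [hfg _ (mem_filter.mp hi).2]

theorem HasDerivAt.log_add_mul_of_nonneg {A B g' x : ℝ} {g : ℝ → ℝ} (hA : 0 ≤ A) (hB : 0 ≤ B)
    (hgx : 0 < g x) (hg : HasDerivAt g g' x) :
    HasDerivAt (fun y => Real.log (A + B * g y)) (B * g x / (A + B * g x) * (g' / g x)) x := by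
  rcases (add_nonneg hA (mul_nonneg hB hgx.le)).eq_or_lt with hF | hF
  · -- Here the function is constantly `Real.log 0 = 0`.
    obtain ⟨rfl, rfl⟩ : A = 0 ∧ B = 0 := by
      have := mul_nonneg hB hgx.le
      exact ⟨by linarith, by nlinarith⟩
    simpa using hasDerivAt_const x (0 : ℝ)
  · convert ((hg.const_mul B).const_add A).log hF.ne' using 1
    field_simp

theorem gp_hyperparameter_gradient_general
    (d : ℕ) (S : Fin d → Type) [∀ i, Fintype (S i)]
    (k : Fin d) [DecidableEq (S k)] (sstar : S k)
    (𝓛 : Type) [Fintype 𝓛]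
    (q : 𝓛 → ℝ) (hq : ∀ L, 0 ≤ q L)
    (r : 𝓛 → (∀ i, S i) → ℝ) (hr : ∀ L G, 0 ≤ r L G)
    (ℓ : ∀ i, S i → ℝ) (hℓpos : ∀ i, i ≠ k → ∀ s, 0 < ℓ i s)
    (ℓk : ℝ → S k → ℝ) (hℓkpos : ∀ ψ s, 0 < ℓk ψ s)
    (hℓkconst : ∀ ψ s, s ≠ sstar → ℓk ψ s = ℓk 0 s)
    (hℓkdiff : Differentiable ℝ (fun ψ => ℓk ψ sstar))
    (F : ℝ → ℝ)
    (hF : ∀ ψ, F ψ =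
      ∑ L, q L * ∑ G : (∀ i, S i),
        r L G * (∏ i ∈ Finset.univ.erase k, ℓ i (G i)) * ℓk ψ (G k))
    (ψ₀ : ℝ) (c : ℝ)
    (hc : c =
      (∑ L, q L * ∑ G ∈ Finset.univ.filter (fun G : (∀ i, S i) => G k = sstar),
        r L G * (∏ i ∈ Finset.univ.erase k, ℓ i (G i)) * ℓk ψ₀ (G k)) / F ψ₀) :
    HasDerivAt (fun ψ => Real.log (F ψ))
        (c * deriv (fun ψ => Real.log (ℓk ψ sstar)) ψ₀) ψ₀
      ∧ 0 ≤ c ∧ c ≤ 1 := by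
  have hw : ∀ L G, 0 ≤ r L G * ∏ i ∈ univ.erase k, ℓ i (G i) := fun L G =>
    mul_nonneg (hr L G) (prod_nonneg fun i hi => (hℓpos i (ne_of_mem_erase hi) _).le)
  set A := ∑ L, q L * ∑ G ∈ univ.filter (fun G : (∀ i, S i) => G k ≠ sstar),
    r L G * (∏ i ∈ univ.erase k, ℓ i (G i)) * ℓk 0 (G k)
  set B := ∑ L, q L * ∑ G ∈ univ.filter (fun G : (∀ i, S i) => G k = sstar),
    r L G * ∏ i ∈ univ.erase k, ℓ i (G i)
  have hA : 0 ≤ A := sum_nonneg fun L _ => mul_nonneg (hq L) <|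
    sum_nonneg fun G _ => mul_nonneg (hw L G) (hℓkpos 0 _).le
  have hB : 0 ≤ B := sum_nonneg fun L _ => mul_nonneg (hq L) <| sum_nonneg fun G _ => hw L G
  have hF_split : ∀ ψ, F ψ = A + B * ℓk ψ sstar := by
    intro ψ
    rw [hF, sum_mul, ← sum_add_distrib]
    refine sum_congr rfl fun L _ => ?_
    rw [sum_mul_eq_add_mul_of_eqOn_ne univ (fun G : (∀ i, S i) => G k) sstar _ (ℓk ψ) (ℓk 0) (hℓkconst ψ)]
    ring
  have hc' : c = B * ℓk ψ₀ sstar / F ψ₀ := by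
    rw [hc, sum_mul]
    congr 1
    refine sum_congr rfl fun L _ => ?_
    rw [sum_filter_mul_eq_sum_mul univ (fun G : (∀ i, S i) => G k) sstar _ (ℓk ψ₀), mul_assoc]
  have hg := (hℓkdiff ψ₀).hasDerivAt
  have hgpos := hℓkpos ψ₀ sstar
  simp only [hF_split] at hc' ⊢
  rw [(hg.log hgpos.ne').deriv, hc']
  refine ⟨hg.log_add_mul_of_nonneg hA hB hgpos, by positivity, ?_⟩
  exact div_le_one_of_le₀ (le_add_of_nonneg_left hA) (by positivity)

/-- Appendix B.2: the gradient of the log posterior w.r.t. the hyper-parameters of a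
single GP (associated with node `k` and parent set `sstar`) is a nonnegative scalar
multiple (with factor in `[0,1]`) of the MAP type-II gradient of that GP. -/
theorem gp_hyperparameter_gradient
    (d : ℕ) (S : Fin d → Type) [∀ i, Fintype (S i)] [∀ i, Nonempty (S i)]
    (k : Fin d) [DecidableEq (S k)] (sstar : S k)
    (𝓛 : Type) [Fintype 𝓛] [Nonempty 𝓛]
    (q : 𝓛 → ℝ) (hq : ∀ L, 0 ≤ q L) (hqsum : ∑ L, q L = 1)
    (r : 𝓛 → (∀ i, S i) → ℝ) (hr : ∀ L G, 0 ≤ r L G) (hrsum : ∀ L, ∑ G, r L G = 1)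
    (ℓ : ∀ i, S i → ℝ) (hℓpos : ∀ i, i ≠ k → ∀ s, 0 < ℓ i s)
    (ℓk : ℝ → S k → ℝ) (hℓkpos : ∀ ψ s, 0 < ℓk ψ s)
    (hℓkconst : ∀ ψ s, s ≠ sstar → ℓk ψ s = ℓk 0 s)
    (hℓkdiff : Differentiable ℝ (fun ψ => ℓk ψ sstar))
    (F : ℝ → ℝ)
    (hF : ∀ ψ, F ψ =
      ∑ L, q L * ∑ G : (∀ i, S i),
        r L G * (∏ i ∈ Finset.univ.erase k, ℓ i (G i)) * ℓk ψ (G k))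
    (ψ₀ : ℝ) (c : ℝ)
    (hc : c =
      (∑ L, q L * ∑ G ∈ Finset.univ.filter (fun G : (∀ i, S i) => G k = sstar),
        r L G * (∏ i ∈ Finset.univ.erase k, ℓ i (G i)) * ℓk ψ₀ (G k)) / F ψ₀) :
    HasDerivAt (fun ψ => Real.log (F ψ))
        (c * deriv (fun ψ => Real.log (ℓk ψ sstar)) ψ₀) ψ₀
      ∧ 0 ≤ c ∧ c ≤ 1 :=
  gp_hyperparameter_gradient_general d S k sstar 𝓛 q hq r hr ℓ hℓpos ℓk hℓkpos hℓkconst hℓkdiff F hF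
    ψ₀ c hc
end
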